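/- Let b₂₀, b₁₁, b₀₂, c₂₀ ∈ ℝ with b₀₂ > 0, let p, q, r : ℝ² → ℝ be smooth functions with vanishing 2-jet at the origin, and let f(x,y) = (x, xy + p(x,y), b₂₀x² + b₁₁xy + b₀₂y² + q(x,y), c₂₀x² + r(x,y)). For ν = (0, v₂, v₃, v₄) ∈ ℝ⁴, the Hessian at the origin of the height function h_ν(x,y) = ⟨f(x,y), ν⟩ equals [[2b₂₀v₃ + 2c₂₀v₄, v₂ + b₁₁v₃], [v₂ + b₁₁v₃, 2b₀₂v₃]], and it is degenerate if and only if (v₂ + b₁₁v₃)² = 4b₀₂v₃(b₂₀v₃ + c₂₀v₄). In particular the set of degenerate normal directions is the zero set of a homogeneous quadratic polynomial in (v₂, v₃, v₄), i.e. a cone. -/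

import Mathlib

open scoped ContDiff

/-- Partial derivative in the first variable of a function of two real variables. -/
noncomputable def pdx (g : ℝ → ℝ → ℝ) (x y : ℝ) : ℝ := deriv (fun t => g t y) x

/-- Partial derivative in the second variable of a function of two real variables. -/
noncomputable def pdy (g : ℝ → ℝ → ℝ) (x y : ℝ) : ℝ := deriv (fun t => g x t) y

/-- The Hessian matrix at the origin of a function of two real variables. -/
noncomputable def hessAt0 (g : ℝ → ℝ → ℝ) : Matrix (Fin 2) (Fin 2) ℝ :=
  !![pdx (pdx g) 0 0, pdy (pdx g) 0 0;
     pdx (pdy g) 0 0, pdy (pdy g) 0 0]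

/-- A function of two real variables has vanishing 2-jet at the origin: its value and all
first- and second-order partial derivatives vanish at `(0,0)`. -/
noncomputable def jet2ZeroAt0 (g : ℝ → ℝ → ℝ) : Prop :=
  g 0 0 = 0 ∧ pdx g 0 0 = 0 ∧ pdy g 0 0 = 0 ∧ hessAt0 g = 0

lemma hasDerivAt_pdx (g : ℝ → ℝ → ℝ) (hg : ContDiff ℝ ∞ (fun w : ℝ × ℝ => g w.1 w.2))
    (x y : ℝ) : HasDerivAt (fun t => g t y) (pdx g x y) x := by
  have hd : DifferentiableAt ℝ (fun t => g t y) x := by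
    have h1 : DifferentiableAt ℝ (fun w : ℝ × ℝ => g w.1 w.2) (x, y) :=
      (hg.differentiable (by norm_num)) (x, y)
    exact h1.comp x (((differentiableAt_id.prodMk (differentiableAt_const y) :
      DifferentiableAt ℝ (fun t : ℝ => (t, y)) x)))
  exact hd.hasDerivAt

lemma hasDerivAt_pdy (g : ℝ → ℝ → ℝ) (hg : ContDiff ℝ ∞ (fun w : ℝ × ℝ => g w.1 w.2))
    (x y : ℝ) : HasDerivAt (fun t => g x t) (pdy g x y) y := by
  have hd : DifferentiableAt ℝ (fun t => g x t) y := by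
    have h1 : DifferentiableAt ℝ (fun w : ℝ × ℝ => g w.1 w.2) (x, y) :=
      (hg.differentiable (by norm_num)) (x, y)
    exact h1.comp y ((differentiableAt_const x).prodMk differentiableAt_id)
  exact hd.hasDerivAt

lemma contDiff_pdx (g : ℝ → ℝ → ℝ) (hg : ContDiff ℝ ∞ (fun w : ℝ × ℝ => g w.1 w.2)) :
    ContDiff ℝ ∞ (fun w : ℝ × ℝ => pdx g w.1 w.2) := by
  have heq : (fun w : ℝ × ℝ => pdx g w.1 w.2)
      = fun w : ℝ × ℝ => fderiv ℝ (fun w : ℝ × ℝ => g w.1 w.2) w ((1 : ℝ), (0 : ℝ)) := by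
    funext w
    have hF : HasFDerivAt (fun w : ℝ × ℝ => g w.1 w.2)
        (fderiv ℝ (fun w : ℝ × ℝ => g w.1 w.2) (w.1, w.2)) (w.1, w.2) :=
      ((hg.differentiable (by norm_num)) (w.1, w.2)).hasFDerivAt
    have hc : HasDerivAt (fun t : ℝ => (t, w.2)) ((1 : ℝ), (0 : ℝ)) w.1 :=
      (hasDerivAt_id w.1).prodMk (hasDerivAt_const w.1 w.2)
    have := hF.comp_hasDerivAt w.1 hc
    simpa [pdx, Function.comp_def] using this.deriv
  rw [heq]
  exact ((contDiff_infty_iff_fderiv.mp hg).2).clm_apply contDiff_const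

lemma contDiff_pdy (g : ℝ → ℝ → ℝ) (hg : ContDiff ℝ ∞ (fun w : ℝ × ℝ => g w.1 w.2)) :
    ContDiff ℝ ∞ (fun w : ℝ × ℝ => pdy g w.1 w.2) := by
  have heq : (fun w : ℝ × ℝ => pdy g w.1 w.2)
      = fun w : ℝ × ℝ => fderiv ℝ (fun w : ℝ × ℝ => g w.1 w.2) w ((0 : ℝ), (1 : ℝ)) := by
    funext w
    have hF : HasFDerivAt (fun w : ℝ × ℝ => g w.1 w.2)
        (fderiv ℝ (fun w : ℝ × ℝ => g w.1 w.2) (w.1, w.2)) (w.1, w.2) :=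
      ((hg.differentiable (by norm_num)) (w.1, w.2)).hasFDerivAt
    have hc : HasDerivAt (fun t : ℝ => (w.1, t)) ((0 : ℝ), (1 : ℝ)) w.2 :=
      (hasDerivAt_const w.2 w.1).prodMk (hasDerivAt_id w.2)
    have := hF.comp_hasDerivAt w.2 hc
    simpa [pdy, Function.comp_def] using this.deriv
  rw [heq]
  exact ((contDiff_infty_iff_fderiv.mp hg).2).clm_apply contDiff_const

lemma jet2_entries {g : ℝ → ℝ → ℝ} (h : jet2ZeroAt0 g) :
    pdx (pdx g) 0 0 = 0 ∧ pdy (pdx g) 0 0 = 0 ∧ pdx (pdy g) 0 0 = 0 ∧ pdy (pdy g) 0 0 = 0 := by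
  obtain ⟨-, -, -, h4⟩ := h
  rw [hessAt0] at h4
  refine ⟨?_, ?_, ?_, ?_⟩
  · simpa using congrFun (congrFun h4 0) 0
  · simpa using congrFun (congrFun h4 0) 1
  · simpa using congrFun (congrFun h4 1) 0
  · simpa using congrFun (congrFun h4 1) 1

lemma deriv_combo {A B C : ℝ → ℝ} {a b c : ℝ} {x : ℝ}
    (hA : HasDerivAt A a x) (hB : HasDerivAt B b x) (hC : HasDerivAt C c x)
    (v₂ v₃ v₄ : ℝ) :
    HasDerivAt (fun t => A t * v₂ + B t * v₃ + C t * v₄) (a * v₂ + b * v₃ + c * v₄) x :=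
  ((hA.mul_const v₂).add (hB.mul_const v₃)).add (hC.mul_const v₄)

/-- For the normal form `f(x,y) = (x, xy + p, b₂₀x² + b₁₁xy + b₀₂y² + q, c₂₀x² + r)` and
`ν = (0, v₂, v₃, v₄)`, the Hessian at the origin of the height function `h_ν = ⟨f, ν⟩`
equals `[[2b₂₀v₃ + 2c₂₀v₄, v₂ + b₁₁v₃], [v₂ + b₁₁v₃, 2b₀₂v₃]]`, and it is degenerate iff
`(v₂ + b₁₁v₃)² = 4b₀₂v₃(b₂₀v₃ + c₂₀v₄)`; thus the degenerate directions form a cone. -/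
theorem stmt13 (b₂₀ b₁₁ b₀₂ c₂₀ : ℝ) (hb₀₂ : b₀₂ > 0) (p q r : ℝ → ℝ → ℝ)
    (hp : ContDiff ℝ (⊤ : ℕ∞) (fun w : ℝ × ℝ => p w.1 w.2))
    (hq : ContDiff ℝ (⊤ : ℕ∞) (fun w : ℝ × ℝ => q w.1 w.2))
    (hr : ContDiff ℝ (⊤ : ℕ∞) (fun w : ℝ × ℝ => r w.1 w.2))
    (hpj : jet2ZeroAt0 p) (hqj : jet2ZeroAt0 q) (hrj : jet2ZeroAt0 r) :
    ∀ v₂ v₃ v₄ : ℝ,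
      hessAt0 (fun x y => (x * y + p x y) * v₂
        + (b₂₀ * x ^ 2 + b₁₁ * x * y + b₀₂ * y ^ 2 + q x y) * v₃
        + (c₂₀ * x ^ 2 + r x y) * v₄)
        = !![2 * b₂₀ * v₃ + 2 * c₂₀ * v₄, v₂ + b₁₁ * v₃;
             v₂ + b₁₁ * v₃, 2 * b₀₂ * v₃] ∧
      ((hessAt0 (fun x y => (x * y + p x y) * v₂
        + (b₂₀ * x ^ 2 + b₁₁ * x * y + b₀₂ * y ^ 2 + q x y) * v₃
        + (c₂₀ * x ^ 2 + r x y) * v₄)).det = 0 ↔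
        (v₂ + b₁₁ * v₃) ^ 2 = 4 * b₀₂ * v₃ * (b₂₀ * v₃ + c₂₀ * v₄)) := by
  have hp' : ContDiff ℝ ∞ (fun w : ℝ × ℝ => p w.1 w.2) := hp.of_le (by simp)
  have hq' : ContDiff ℝ ∞ (fun w : ℝ × ℝ => q w.1 w.2) := hq.of_le (by simp)
  have hr' : ContDiff ℝ ∞ (fun w : ℝ × ℝ => r w.1 w.2) := hr.of_le (by simp)
  obtain ⟨hp11, hp12, hp21, hp22⟩ := jet2_entries hpj
  obtain ⟨hq11, hq12, hq21, hq22⟩ := jet2_entries hqj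
  obtain ⟨hr11, hr12, hr21, hr22⟩ := jet2_entries hrj
  intro v₂ v₃ v₄
  set G : ℝ → ℝ → ℝ := fun x y => (x * y + p x y) * v₂
      + (b₂₀ * x ^ 2 + b₁₁ * x * y + b₀₂ * y ^ 2 + q x y) * v₃
      + (c₂₀ * x ^ 2 + r x y) * v₄ with hGdef
  -- first partial derivatives
  have hGx : ∀ x y, pdx G x y = (y + pdx p x y) * v₂
      + (2 * b₂₀ * x + b₁₁ * y + pdx q x y) * v₃ + (2 * c₂₀ * x + pdx r x y) * v₄ := by
    intro x y
    have hA : HasDerivAt (fun t => t * y + p t y) (y + pdx p x y) x := by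
      have h1 : HasDerivAt (fun t : ℝ => t * y) y x := by
        simpa using (hasDerivAt_id x).mul_const y
      exact h1.add (hasDerivAt_pdx p hp' x y)
    have hsq : HasDerivAt (fun t : ℝ => t ^ 2) (2 * x) x := by
      simpa using hasDerivAt_pow 2 x
    have hB : HasDerivAt (fun t => b₂₀ * t ^ 2 + b₁₁ * t * y + b₀₂ * y ^ 2 + q t y)
        (2 * b₂₀ * x + b₁₁ * y + pdx q x y) x := by
      have h1 : HasDerivAt (fun t : ℝ => b₂₀ * t ^ 2 + b₁₁ * t * y + b₀₂ * y ^ 2)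
          (2 * b₂₀ * x + b₁₁ * y) x := by
        have h := ((hsq.const_mul b₂₀).add
          ((HasDerivAt.const_mul b₁₁ (hasDerivAt_id' x)).mul_const y)).add (hasDerivAt_const x (b₀₂ * y ^ 2))
        exact h.congr_deriv (by ring)
      exact h1.add (hasDerivAt_pdx q hq' x y)
    have hC : HasDerivAt (fun t => c₂₀ * t ^ 2 + r t y) (2 * c₂₀ * x + pdx r x y) x := by
      have h1 : HasDerivAt (fun t : ℝ => c₂₀ * t ^ 2) (2 * c₂₀ * x) x := by
        have h := hsq.const_mul c₂₀
        exact h.congr_deriv (by ring)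
      exact h1.add (hasDerivAt_pdx r hr' x y)
    exact (deriv_combo hA hB hC v₂ v₃ v₄).deriv
  have hGy : ∀ x y, pdy G x y = (x + pdy p x y) * v₂
      + (b₁₁ * x + 2 * b₀₂ * y + pdy q x y) * v₃ + (pdy r x y) * v₄ := by
    intro x y
    have hA : HasDerivAt (fun t => x * t + p x t) (x + pdy p x y) y := by
      have h1 : HasDerivAt (fun t : ℝ => x * t) x y := by
        simpa using (hasDerivAt_id y).const_mul x
      exact h1.add (hasDerivAt_pdy p hp' x y)
    have hB : HasDerivAt (fun t => b₂₀ * x ^ 2 + b₁₁ * x * t + b₀₂ * t ^ 2 + q x t)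
        (b₁₁ * x + 2 * b₀₂ * y + pdy q x y) y := by
      have hsqy : HasDerivAt (fun t : ℝ => t ^ 2) (2 * y) y := by
        simpa using hasDerivAt_pow 2 y
      have h1 : HasDerivAt (fun t : ℝ => b₂₀ * x ^ 2 + b₁₁ * x * t + b₀₂ * t ^ 2)
          (b₁₁ * x + 2 * b₀₂ * y) y := by
        have h := ((hasDerivAt_const y (b₂₀ * x ^ 2)).add
          (HasDerivAt.const_mul (b₁₁ * x) (hasDerivAt_id' y))).add (hsqy.const_mul b₀₂)
        exact h.congr_deriv (by ring)
      exact h1.add (hasDerivAt_pdy q hq' x y)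
    have hC : HasDerivAt (fun t => c₂₀ * x ^ 2 + r x t) (pdy r x y) y := by
      have := (hasDerivAt_const y (c₂₀ * x ^ 2)).add (hasDerivAt_pdy r hr' x y)
      simpa [Pi.add_def] using this
    have key := (deriv_combo hA hB hC v₂ v₃ v₄).deriv
    simpa [pdy] using key
  -- second partial derivatives at the origin
  have hppx := contDiff_pdx p hp'
  have hqpx := contDiff_pdx q hq'
  have hrpx := contDiff_pdx r hr'
  have hppy := contDiff_pdy p hp'
  have hqpy := contDiff_pdy q hq'
  have hrpy := contDiff_pdy r hr'
  have e11 : pdx (pdx G) 0 0 = 2 * b₂₀ * v₃ + 2 * c₂₀ * v₄ := by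
    have hfun : (fun t => pdx G t 0) = fun t => (0 + pdx p t 0) * v₂
        + (2 * b₂₀ * t + b₁₁ * 0 + pdx q t 0) * v₃ + (2 * c₂₀ * t + pdx r t 0) * v₄ :=
      funext fun t => hGx t 0
    have hA : HasDerivAt (fun t => (0 : ℝ) + pdx p t 0) (0 + pdx (pdx p) 0 0) 0 :=
      (hasDerivAt_const 0 (0 : ℝ)).add (hasDerivAt_pdx (pdx p) hppx 0 0)
    have hB : HasDerivAt (fun t => 2 * b₂₀ * t + b₁₁ * 0 + pdx q t 0)
        (2 * b₂₀ + 0 + pdx (pdx q) 0 0) 0 := by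
      have h1 : HasDerivAt (fun t : ℝ => 2 * b₂₀ * t + b₁₁ * 0) (2 * b₂₀ + 0) 0 := by
        simpa using ((hasDerivAt_id (0 : ℝ)).const_mul (2 * b₂₀)).add_const (b₁₁ * 0)
      exact h1.add (hasDerivAt_pdx (pdx q) hqpx 0 0)
    have hC : HasDerivAt (fun t => 2 * c₂₀ * t + pdx r t 0) (2 * c₂₀ + pdx (pdx r) 0 0) 0 := by
      have h1 : HasDerivAt (fun t : ℝ => 2 * c₂₀ * t) (2 * c₂₀) 0 := by
        simpa using (hasDerivAt_id (0 : ℝ)).const_mul (2 * c₂₀)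
      exact h1.add (hasDerivAt_pdx (pdx r) hrpx 0 0)
    have key := (deriv_combo hA hB hC v₂ v₃ v₄).deriv
    have : pdx (pdx G) 0 0 = (0 + pdx (pdx p) 0 0) * v₂ + (2 * b₂₀ + 0 + pdx (pdx q) 0 0) * v₃
        + (2 * c₂₀ + pdx (pdx r) 0 0) * v₄ := by
      rw [pdx, hfun]; exact key
    rw [this, hp11, hq11, hr11]; ring
  have e12 : pdy (pdx G) 0 0 = v₂ + b₁₁ * v₃ := by
    have hfun : (fun t => pdx G 0 t) = fun t => (t + pdx p 0 t) * v₂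
        + (2 * b₂₀ * 0 + b₁₁ * t + pdx q 0 t) * v₃ + (2 * c₂₀ * 0 + pdx r 0 t) * v₄ :=
      funext fun t => hGx 0 t
    have hA : HasDerivAt (fun t => t + pdx p 0 t) (1 + pdy (pdx p) 0 0) 0 :=
      (hasDerivAt_id 0).add (hasDerivAt_pdy (pdx p) hppx 0 0)
    have hB : HasDerivAt (fun t => 2 * b₂₀ * 0 + b₁₁ * t + pdx q 0 t)
        (0 + b₁₁ + pdy (pdx q) 0 0) 0 := by
      have h1 : HasDerivAt (fun t : ℝ => 2 * b₂₀ * 0 + b₁₁ * t) (0 + b₁₁) 0 := by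
        simpa [Pi.add_def] using (hasDerivAt_const (0 : ℝ) (2 * b₂₀ * 0)).add ((hasDerivAt_id (0:ℝ)).const_mul b₁₁)
      exact h1.add (hasDerivAt_pdy (pdx q) hqpx 0 0)
    have hC : HasDerivAt (fun t => 2 * c₂₀ * 0 + pdx r 0 t) (0 + pdy (pdx r) 0 0) 0 :=
      (hasDerivAt_const 0 (2 * c₂₀ * 0)).add (hasDerivAt_pdy (pdx r) hrpx 0 0)
    have key := (deriv_combo hA hB hC v₂ v₃ v₄).deriv
    have : pdy (pdx G) 0 0 = (1 + pdy (pdx p) 0 0) * v₂ + (0 + b₁₁ + pdy (pdx q) 0 0) * v₃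
        + (0 + pdy (pdx r) 0 0) * v₄ := by
      rw [pdy, hfun]; exact key
    rw [this, hp12, hq12, hr12]; ring
  have e21 : pdx (pdy G) 0 0 = v₂ + b₁₁ * v₃ := by
    have hfun : (fun t => pdy G t 0) = fun t => (t + pdy p t 0) * v₂
        + (b₁₁ * t + 2 * b₀₂ * 0 + pdy q t 0) * v₃ + (pdy r t 0) * v₄ :=
      funext fun t => hGy t 0
    have hA : HasDerivAt (fun t => t + pdy p t 0) (1 + pdx (pdy p) 0 0) 0 :=
      (hasDerivAt_id 0).add (hasDerivAt_pdx (pdy p) hppy 0 0)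
    have hB : HasDerivAt (fun t => b₁₁ * t + 2 * b₀₂ * 0 + pdy q t 0)
        (b₁₁ + 0 + pdx (pdy q) 0 0) 0 := by
      have h1 : HasDerivAt (fun t : ℝ => b₁₁ * t + 2 * b₀₂ * 0) (b₁₁ + 0) 0 := by
        simpa using ((hasDerivAt_id (0:ℝ)).const_mul b₁₁).add_const (2 * b₀₂ * 0)
      exact h1.add (hasDerivAt_pdx (pdy q) hqpy 0 0)
    have hC : HasDerivAt (fun t => pdy r t 0) (pdx (pdy r) 0 0) 0 :=
      hasDerivAt_pdx (pdy r) hrpy 0 0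
    have key := (deriv_combo hA hB hC v₂ v₃ v₄).deriv
    have : pdx (pdy G) 0 0 = (1 + pdx (pdy p) 0 0) * v₂ + (b₁₁ + 0 + pdx (pdy q) 0 0) * v₃
        + (pdx (pdy r) 0 0) * v₄ := by
      rw [pdx, hfun]; exact key
    rw [this, hp21, hq21, hr21]; ring
  have e22 : pdy (pdy G) 0 0 = 2 * b₀₂ * v₃ := by
    have hfun : (fun t => pdy G 0 t) = fun t => (0 + pdy p 0 t) * v₂
        + (b₁₁ * 0 + 2 * b₀₂ * t + pdy q 0 t) * v₃ + (pdy r 0 t) * v₄ :=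
      funext fun t => hGy 0 t
    have hA : HasDerivAt (fun t => (0 : ℝ) + pdy p 0 t) (0 + pdy (pdy p) 0 0) 0 :=
      (hasDerivAt_const 0 (0 : ℝ)).add (hasDerivAt_pdy (pdy p) hppy 0 0)
    have hB : HasDerivAt (fun t => b₁₁ * 0 + 2 * b₀₂ * t + pdy q 0 t)
        (0 + 2 * b₀₂ + pdy (pdy q) 0 0) 0 := by
      have h1 : HasDerivAt (fun t : ℝ => b₁₁ * 0 + 2 * b₀₂ * t) (0 + 2 * b₀₂) 0 := by
        simpa [Pi.add_def] using (hasDerivAt_const (0:ℝ) (b₁₁ * 0)).add ((hasDerivAt_id (0:ℝ)).const_mul (2 * b₀₂))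
      exact h1.add (hasDerivAt_pdy (pdy q) hqpy 0 0)
    have hC : HasDerivAt (fun t => pdy r 0 t) (pdy (pdy r) 0 0) 0 :=
      hasDerivAt_pdy (pdy r) hrpy 0 0
    have key := (deriv_combo hA hB hC v₂ v₃ v₄).deriv
    have : pdy (pdy G) 0 0 = (0 + pdy (pdy p) 0 0) * v₂ + (0 + 2 * b₀₂ + pdy (pdy q) 0 0) * v₃
        + (pdy (pdy r) 0 0) * v₄ := by
      rw [pdy, hfun]; exact key
    rw [this, hp22, hq22, hr22]; ring
  have hmat : hessAt0 G = !![2 * b₂₀ * v₃ + 2 * c₂₀ * v₄, v₂ + b₁₁ * v₃;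
      v₂ + b₁₁ * v₃, 2 * b₀₂ * v₃] := by
    rw [hessAt0, e11, e12, e21, e22]
  refine ⟨hmat, ?_⟩
  rw [hmat, Matrix.det_fin_two_of]
  constructor
  · intro h; linear_combination -h
  · intro h; linear_combination -h
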